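/- Let q be a positive integer divisible by 4, N a positive integer divisible by 4, and c ∈ ℤ⁴ a vector with at least one odd coordinate. Then the sum S_q(c) = Σ*_{a mod q} Σ_{b mod q, b∈(ℤ/q)⁴} e((a(F(b) − N) + b·c)/q) vanishes, where F(x) = x₁²+x₂²+x₃²+x₄². -/

import Mathlib

/-
The inner sum factors over the four coordinates into one-dimensional sums
`∑_{x mod q} e((a x² + c_i x)/q)`. When `q = 4s` and `c_i` is odd, shifting `x` by `q/2 = 2s`
changes the phase by `a x + a s + c_i/2`, i.e. multiplies the summand by `-1`; so the summand is
antiperiodic with period `q/2` and the sum over a full period vanishes.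
-/

open Finset

/-- `e(x) = exp(2πi x)`. -/
noncomputable def e (x : ℝ) : ℂ := Complex.exp (2 * Real.pi * Complex.I * x)

/-- The Kloosterman sum `S(m,n;q) = Σ_{x mod q, (x,q)=1} e((m x + n x̄)/q)`. -/
noncomputable def kloosterman (m n : ℤ) (q : ℕ) : ℂ :=
  ∑ x ∈ (Finset.range q).filter (fun x => Nat.Coprime x q),
    e (((m * (x : ℤ) + n * ((((x : ZMod q)⁻¹).val : ℤ)) : ℤ) : ℝ) / q)

/-- The quadratic form `F(x) = x₁² + x₂² + x₃² + x₄²`. -/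
def F (c : Fin 4 → ℤ) : ℤ := ∑ i, (c i) ^ 2

/-- The exponential sum `S_q(c) = Σ*_{a mod q} Σ_{b mod q, b ∈ (ℤ/q)⁴}
    e((a(F(b) - N) + b·c)/q)`. -/
noncomputable def Sq (q : ℕ) (N : ℤ) (c : Fin 4 → ℤ) : ℂ :=
  ∑ a ∈ (Finset.range q).filter (fun a => Nat.Coprime a q),
    ∑ b : Fin 4 → Fin q,
      e ((((a : ℤ) * (F (fun i => ((b i : ℕ) : ℤ)) - N) +
            ∑ i, ((b i : ℕ) : ℤ) * c i : ℤ) : ℝ) / q)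

lemma e_add (x y : ℝ) : e (x + y) = e x * e y := by
  simp [e, mul_add, Complex.exp_add]

lemma e_sum {ι : Type*} (s : Finset ι) (f : ι → ℝ) :
    e (∑ i ∈ s, f i) = ∏ i ∈ s, e (f i) := by
  simp only [e, Complex.ofReal_sum, Finset.mul_sum, Complex.exp_sum]

lemma e_intCast (m : ℤ) : e m = 1 := by
  rw [e, show 2 * (Real.pi : ℂ) * Complex.I * ((m : ℝ) : ℂ) = m * (2 * Real.pi * Complex.I) by
    push_cast; ring, Complex.exp_int_mul_two_pi_mul_I]

lemma e_half_of_odd {m : ℤ} (hm : Odd m) : e (m / 2) = -1 := by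
  rw [e, show 2 * (Real.pi : ℂ) * Complex.I * (((m : ℝ) / 2 : ℝ) : ℂ) = m * (Real.pi * Complex.I) by
    push_cast; ring, Complex.exp_int_mul, Complex.exp_pi_mul_I, hm.neg_one_zpow]

lemma Function.Antiperiodic.sum_range_two_mul_eq_zero {M : Type*} [AddCommGroup M] {f : ℕ → M}
    {n : ℕ} (h : Function.Antiperiodic f n) : ∑ x ∈ range (2 * n), f x = 0 := by
  simp only [two_mul, sum_range_add, add_comm n, h _, sum_neg_distrib, add_neg_cancel]

noncomputable def quadExpSum (q : ℕ) (a m : ℤ) : ℂ :=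
  ∑ x : Fin q, e ((a * ((x : ℕ) : ℤ) ^ 2 + ((x : ℕ) : ℤ) * m : ℤ) / q)

lemma antiperiodic_quadPhase {s : ℕ} (hs : 0 < s) (a : ℤ) {m : ℤ} (hm : Odd m) :
    Function.Antiperiodic (fun x : ℕ => e ((a * (x : ℤ) ^ 2 + x * m : ℤ) / (4 * s : ℕ)))
      (2 * s) := by
  intro x
  have hphase : ((a * ((x + 2 * s : ℕ) : ℤ) ^ 2 + ((x + 2 * s : ℕ) : ℤ) * m : ℤ) : ℝ) / (4 * s : ℕ)
      = ((a * x + a * s : ℤ) : ℝ) + (m : ℝ) / 2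
        + ((a * (x : ℤ) ^ 2 + (x : ℤ) * m : ℤ) : ℝ) / (4 * s : ℕ) := by
    have : (s : ℝ) ≠ 0 := by positivity
    push_cast
    field_simp
    ring
  simp only [hphase, e_add, e_intCast, e_half_of_odd hm]
  ring

lemma quadExpSum_eq_zero {q : ℕ} (hq : 4 ∣ q) (a : ℤ) {m : ℤ} (hm : Odd m) :
    quadExpSum q a m = 0 := by
  obtain ⟨s, rfl⟩ := hq
  rcases Nat.eq_zero_or_pos s with rfl | hs
  · simp [quadExpSum]
  have hsum := (antiperiodic_quadPhase hs a hm).sum_range_two_mul_eq_zero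
  rw [← mul_assoc] at hsum
  rwa [quadExpSum, Fin.sum_univ_eq_sum_range
    (fun x => e ((a * (x : ℤ) ^ 2 + (x : ℤ) * m : ℤ) / (4 * s : ℕ)))]

lemma Sq_eq_sum_mul_prod_quadExpSum (q : ℕ) (N : ℤ) (c : Fin 4 → ℤ) :
    Sq q N c = ∑ a ∈ (range q).filter (fun a => Nat.Coprime a q),
      e ((-(a * N) : ℤ) / q) * ∏ i, quadExpSum q a (c i) := by
  refine sum_congr rfl fun a _ => ?_
  have hphase : ∀ b : Fin 4 → Fin q,
      ((a : ℤ) * (F (fun i => ((b i : ℕ) : ℤ)) - N) + ∑ i, ((b i : ℕ) : ℤ) * c i)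
        = -(a * N) + ∑ i, ((a : ℤ) * ((b i : ℕ) : ℤ) ^ 2 + ((b i : ℕ) : ℤ) * c i) := by
    intro b
    rw [F, sum_add_distrib, mul_sub, mul_sum]
    ring
  simp only [hphase, Int.cast_add, Int.cast_sum, add_div, sum_div, e_add, e_sum, ← mul_sum,
    quadExpSum, Fintype.prod_sum]

theorem stmt_3_general (q N : ℕ) (hq4 : 4 ∣ q)
    (c : Fin 4 → ℤ) (hc : ∃ i, Odd (c i)) :
    Sq q (N : ℤ) c = 0 := by
  obtain ⟨i, hi⟩ := hc
  rw [Sq_eq_sum_mul_prod_quadExpSum]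
  refine sum_eq_zero fun a _ => ?_
  rw [prod_eq_zero (mem_univ i) (quadExpSum_eq_zero hq4 a hi), mul_zero]

theorem stmt_3 (q N : ℕ) (hq0 : 0 < q) (hN0 : 0 < N) (hq4 : 4 ∣ q) (hN4 : 4 ∣ N)
    (c : Fin 4 → ℤ) (hc : ∃ i, Odd (c i)) :
    Sq q (N : ℤ) c = 0 :=
  stmt_3_general q N hq4 c hc
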